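/- Let λ > 0 and μ > 0, and let K : D² × D² → M₃(ℂ) be the Type I kernel with equal parameters: K(z,w) = D(z,w)·A(z,w)·D(z,w)·(1 − z₁w̄₁)^{−λ−2}(1 − z₂w̄₂)^{−λ−2}, where D(z,w) = diag((1−z₁w̄₁)(1−z₂w̄₂), 1−z₂w̄₂, 1−z₁w̄₁) and A(z,w) has rows (1, z₁, z₂), (w̄₁, 1/λ + μ² + z₁w̄₁, w̄₁z₂), (w̄₂, z₁w̄₂, 1/λ + μ² + z₂w̄₂). Let T ∈ M₃(ℂ) be the permutation matrix with Te₁ = e₁, Te₂ = e₃, Te₃ = e₂. Then for all z = (z₁,z₂), w = (w₁,w₂) ∈ D²: K((z₂,z₁), (w₂,w₁)) = T · K((z₁,z₂), (w₁,w₂)) · T*. -/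

import Mathlib

/-!
The kernel has the shape `c • (D * A * D)` with `D` diagonal. Swapping the coordinates of `z`
and `w` leaves the scalar `c` unchanged and reindexes both `D` and `A` by the transposition
`(1 2)` of `Fin 3`; reindexing commutes with products because the transposition is a bijection,
and reindexing by a permutation is conjugation by its permutation matrix.
-/

open Matrix

/-- The Type I kernel on the bidisc with equal parameters `λ₁ = λ₂ = λ`, `μ₁ = μ₂ = μ`:
`K(z,w) = D(z,w) · A(z,w) · D(z,w) · (1 − z₁w̄₁)^{−λ−2} (1 − z₂w̄₂)^{−λ−2}`. -/
noncomputable def bidiscKernel (lam μ : ℝ) (z₁ z₂ w₁ w₂ : ℂ) : Matrix (Fin 3) (Fin 3) ℂ :=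
  ((1 - z₁ * star w₁) ^ (-(lam : ℂ) - 2) * (1 - z₂ * star w₂) ^ (-(lam : ℂ) - 2)) •
    (Matrix.diagonal
        ![(1 - z₁ * star w₁) * (1 - z₂ * star w₂), 1 - z₂ * star w₂, 1 - z₁ * star w₁] *
      !![1, z₁, z₂;
         star w₁, 1 / (lam : ℂ) + (μ : ℂ) ^ 2 + z₁ * star w₁, star w₁ * z₂;
         star w₂, z₁ * star w₂, 1 / (lam : ℂ) + (μ : ℂ) ^ 2 + z₂ * star w₂] *
      Matrix.diagonal
        ![(1 - z₁ * star w₁) * (1 - z₂ * star w₂), 1 - z₂ * star w₂, 1 - z₁ * star w₁])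

theorem Matrix.permMatrix_mul_mul_conjTranspose_permMatrix {n R : Type*} [DecidableEq n]
    [Fintype n] [NonAssocSemiring R] [StarRing R] (σ : Equiv.Perm n) (M : Matrix n n R) :
    σ.permMatrix R * M * (σ.permMatrix R)ᴴ = M.submatrix σ σ := by
  rw [conjTranspose_permMatrix, PEquiv.toMatrix_toPEquiv_mul, PEquiv.mul_toMatrix_toPEquiv,
    submatrix_submatrix]
  rfl

theorem Matrix.submatrix_smul_diagonal_mul_mul_diagonal {m n R : Type*} [Fintype m] [Fintype n]
    [DecidableEq m] [DecidableEq n] [NonUnitalNonAssocSemiring R] (e : n ≃ m) (c : R)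
    (d : m → R) (A : Matrix m m R) :
    (c • (diagonal d * A * diagonal d)).submatrix e e =
      c • (diagonal (d ∘ e) * A.submatrix e e * diagonal (d ∘ e)) := by
  rw [← submatrix_diagonal_equiv, submatrix_mul_equiv, submatrix_mul_equiv]
  rfl

theorem Equiv.permMatrix_swap_one_two_fin_three :
    (Equiv.swap (1 : Fin 3) 2).permMatrix ℂ = !![1, 0, 0; 0, 0, 1; 0, 1, 0] := by
  ext i j
  fin_cases i <;> fin_cases j <;> simp [Equiv.swap_apply_def]

theorem bidiscKernel_swap (lam μ : ℝ) (z₁ z₂ w₁ w₂ : ℂ) :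
    bidiscKernel lam μ z₂ z₁ w₂ w₁ =
      (bidiscKernel lam μ z₁ z₂ w₁ w₂).submatrix (Equiv.swap 1 2) (Equiv.swap 1 2) := by
  rw [bidiscKernel, bidiscKernel, submatrix_smul_diagonal_mul_mul_diagonal]
  have hD : ![(1 - z₁ * star w₁) * (1 - z₂ * star w₂), 1 - z₂ * star w₂, 1 - z₁ * star w₁] ∘
      Equiv.swap 1 2 =
      ![(1 - z₂ * star w₂) * (1 - z₁ * star w₁), 1 - z₁ * star w₁, 1 - z₂ * star w₂] := by
    ext i
    fin_cases i <;> simp [Equiv.swap_apply_def, mul_comm]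
  rw [hD, mul_comm ((1 - z₁ * star w₁) ^ _)]
  congr 3
  ext i j
  fin_cases i <;> fin_cases j <;> simp [Equiv.swap_apply_def, mul_comm]

theorem statement17_general (lam μ : ℝ)
    (z₁ z₂ w₁ w₂ : ℂ) :
    bidiscKernel lam μ z₂ z₁ w₂ w₁ =
      (!![1, 0, 0; 0, 0, 1; 0, 1, 0] : Matrix (Fin 3) (Fin 3) ℂ) *
        bidiscKernel lam μ z₁ z₂ w₁ w₂ *
        (!![1, 0, 0; 0, 0, 1; 0, 1, 0] : Matrix (Fin 3) (Fin 3) ℂ)ᴴ := by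
  rw [← Equiv.permMatrix_swap_one_two_fin_three, permMatrix_mul_mul_conjTranspose_permMatrix,
    bidiscKernel_swap]

/-- Swap-invariance of the equal-parameter Type I kernel on the bidisc:
with `T` the permutation matrix exchanging the last two coordinates,
`K((z₂,z₁),(w₂,w₁)) = T · K((z₁,z₂),(w₁,w₂)) · T*`. -/
theorem statement17 (lam μ : ℝ) (hlam : 0 < lam) (hμ : 0 < μ)
    (z₁ z₂ w₁ w₂ : ℂ)
    (hz₁ : ‖z₁‖ < 1) (hz₂ : ‖z₂‖ < 1)
    (hw₁ : ‖w₁‖ < 1) (hw₂ : ‖w₂‖ < 1) :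
    bidiscKernel lam μ z₂ z₁ w₂ w₁ =
      (!![1, 0, 0; 0, 0, 1; 0, 1, 0] : Matrix (Fin 3) (Fin 3) ℂ) *
        bidiscKernel lam μ z₁ z₂ w₁ w₂ *
        (!![1, 0, 0; 0, 0, 1; 0, 1, 0] : Matrix (Fin 3) (Fin 3) ℂ)ᴴ :=
  statement17_general lam μ z₁ z₂ w₁ w₂
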